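/- arXiv:2005.08671 — 3 statements merged into one kernel-verified Lean document; each statement's English description precedes it below -/
import Mathlib

section
/- Let R ≠ 0 and c₁ > 0, c₂ ∈ ℝ be such that c₁(tanh²(½√c₁·(t+c₂)) - 1)/(2R) > 0 for t in an open interval I. Then ω(t) = log(c₁(tanh²(½√c₁·(t+c₂)) - 1)/(2R)) satisfies ω''(t) = R·e^{ω(t)} on I. -/
/-! Since `tanh² - 1 = -sech²`, `ω(t) = log K - 2 log cosh (k (t + c₂))` with `K = -c₁ / (2R)` and
`k = √c₁ / 2`. As `(log cosh)' = tanh` and `tanh' = sech²`, this gives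
`ω'' = -2k² sech² = -(c₁ / 2) sech² = R · K sech² = R e^ω`. -/

open Real

namespace Real

theorem tanh_sq_sub_one (x : ℝ) : tanh x ^ 2 - 1 = -(cosh x ^ 2)⁻¹ := by
  rw [tanh_eq_sinh_div_cosh]
  field_simp
  linear_combination -cosh_sq_sub_sinh_sq x

theorem hasDerivAt_log_cosh (x : ℝ) : HasDerivAt (fun x => log (cosh x)) (tanh x) x := by
  simpa [tanh_eq_sinh_div_cosh] using (hasDerivAt_cosh x).log (cosh_pos x).ne'

theorem hasDerivAt_tanh (x : ℝ) : HasDerivAt tanh (cosh x ^ 2)⁻¹ x := by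
  have h := (hasDerivAt_sinh x).div (hasDerivAt_cosh x) (cosh_pos x).ne'
  rw [← sq, ← sq, cosh_sq_sub_sinh_sq, one_div] at h
  exact (funext tanh_eq_sinh_div_cosh : tanh = sinh / cosh) ▸ h

end Real

theorem iteratedDeriv_two_log_div_cosh_sq {K : ℝ} (hK : K ≠ 0) (k c s : ℝ) :
    iteratedDeriv 2 (fun s => log (K / cosh (k * (s + c)) ^ 2)) s
      = -2 * k ^ 2 / cosh (k * (s + c)) ^ 2 := by
  have hu (s : ℝ) : HasDerivAt (fun s => k * (s + c)) k s := by
    simpa using ((hasDerivAt_id s).add_const c).const_mul k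
  have hlog : (fun s => log (K / cosh (k * (s + c)) ^ 2))
      = fun s => log K - 2 * log (cosh (k * (s + c))) := by
    funext s
    rw [log_div hK (pow_ne_zero 2 (cosh_pos _).ne'), log_pow]
    push_cast
    ring
  have hderiv : deriv (fun s => log (K / cosh (k * (s + c)) ^ 2))
      = fun s => -2 * k * tanh (k * (s + c)) := by
    funext s
    rw [hlog]
    exact (((hasDerivAt_log_cosh _).comp s (hu s)).const_mul 2 |>.const_sub _).deriv.trans
      (by ring)
  rw [iteratedDeriv_succ, iteratedDeriv_one, hderiv]
  exact (((hasDerivAt_tanh _).comp s (hu s)).const_mul (-2 * k)).deriv.trans (by ring)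

theorem stmt_2_general (R c₁ c₂ : ℝ) (hc₁ : 0 < c₁) (a b : ℝ)
    (hpos : ∀ t ∈ Set.Ioo a b,
      0 < c₁ * ((Real.tanh ((1 / 2) * Real.sqrt c₁ * (t + c₂))) ^ 2 - 1) / (2 * R))
    (ω : ℝ → ℝ)
    (hω : ∀ t, ω t =
      Real.log (c₁ * ((Real.tanh ((1 / 2) * Real.sqrt c₁ * (t + c₂))) ^ 2 - 1) / (2 * R))) :
    ∀ t ∈ Set.Ioo a b, iteratedDeriv 2 ω t = R * Real.exp (ω t) := by
  intro t ht
  have hR : R ≠ 0 := by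
    rintro rfl
    -- division by `0` returns `0`, contradicting positivity
    simpa using hpos t ht
  have hsech (s : ℝ) : c₁ * (tanh (1 / 2 * √c₁ * (s + c₂)) ^ 2 - 1) / (2 * R)
      = -c₁ / (2 * R) / cosh (1 / 2 * √c₁ * (s + c₂)) ^ 2 := by
    rw [tanh_sq_sub_one]
    ring
  have hωsech : ω = fun s => log (-c₁ / (2 * R) / cosh (1 / 2 * √c₁ * (s + c₂)) ^ 2) :=
    funext fun s => (hω s).trans (congrArg log (hsech s))
  rw [hω t, exp_log (hpos t ht), hsech, hωsech,
    iteratedDeriv_two_log_div_cosh_sq (by simp [hc₁.ne', hR]), mul_pow, sq_sqrt hc₁.le]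
  field_simp

theorem stmt_2 (R c₁ c₂ : ℝ) (hR : R ≠ 0) (hc₁ : 0 < c₁) (a b : ℝ)
    (hpos : ∀ t ∈ Set.Ioo a b,
      0 < c₁ * ((Real.tanh ((1 / 2) * Real.sqrt c₁ * (t + c₂))) ^ 2 - 1) / (2 * R))
    (ω : ℝ → ℝ)
    (hω : ∀ t, ω t =
      Real.log (c₁ * ((Real.tanh ((1 / 2) * Real.sqrt c₁ * (t + c₂))) ^ 2 - 1) / (2 * R))) :
    ∀ t ∈ Set.Ioo a b, iteratedDeriv 2 ω t = R * Real.exp (ω t) :=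
  stmt_2_general R c₁ c₂ hc₁ a b hpos ω hω
end

section
/- The function Ω₁(t,x) = e^{2x}·(e^{x+t} - ¼e^{x-t})⁻², defined where e^{x+t} ≠ ¼e^{x-t}, satisfies the equation ∂ₜ²ω - ∂ₓ²ω = 2·e^{ω} for ω = log Ω₁, i.e. the conformally flat metric Ω₁·η has constant scalar curvature R = 2. -/
/-!
Since `exp (x + t) - ¼ exp (x - t) = exp x · sinh (t + log 2)`, the factor `exp (2x)` cancels and
`Ω₁ t x = sinh (t + log 2)⁻²` does not depend on `x`. So `ω t x = u (t + log 2)` with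
`u s = -log (sinh s ^ 2)`, whose first derivative is `-2 coth s` and whose second derivative is
`2 / sinh² s = 2 exp (u s)` because `cosh² - sinh² = 1`.
-/

open Real Filter

lemma exp_add_sub_quarter_mul_exp_sub (t x : ℝ) :
    exp (x + t) - 1 / 4 * exp (x - t) = exp x * sinh (t + log 2) := by
  rw [sinh_eq, neg_add, exp_add, exp_add, exp_add, exp_sub, exp_neg, exp_neg, exp_log two_pos]
  field_simp
  ring

lemma exp_two_mul_div_exp_mul_sq (x a : ℝ) : exp (2 * x) / (exp x * a) ^ 2 = (a ^ 2)⁻¹ := by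
  rw [mul_pow, ← exp_nat_mul, Nat.cast_ofNat, div_mul_cancel_left₀ (exp_ne_zero _)]

lemma hasDerivAt_neg_log_sinh_sq {s : ℝ} (hs : s ≠ 0) :
    HasDerivAt (fun s => -log (sinh s ^ 2)) (-2 * (cosh s / sinh s)) s := by
  have hsinh : sinh s ≠ 0 := sinh_ne_zero.mpr hs
  refine (((hasDerivAt_sinh s).pow 2).log (pow_ne_zero 2 hsinh)).neg.congr_deriv ?_
  simp only [Pi.pow_apply]
  field_simp
  ring

lemma hasDerivAt_neg_two_mul_coth {s : ℝ} (hs : s ≠ 0) :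
    HasDerivAt (fun s => -2 * (cosh s / sinh s)) (2 / sinh s ^ 2) s := by
  have hsinh : sinh s ≠ 0 := sinh_ne_zero.mpr hs
  refine (((hasDerivAt_cosh s).div (hasDerivAt_sinh s) hsinh).const_mul (-2)).congr_deriv ?_
  rw [← sq, ← sq, cosh_sq]
  field_simp
  ring

lemma iteratedDeriv_two_neg_log_sinh_sq {s : ℝ} (hs : s ≠ 0) :
    iteratedDeriv 2 (fun s => -log (sinh s ^ 2)) s = 2 * exp (-log (sinh s ^ 2)) := by
  have hderiv : deriv (fun s => -log (sinh s ^ 2)) =ᶠ[nhds s] fun s => -2 * (cosh s / sinh s) := by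
    filter_upwards [eventually_ne_nhds hs] with r hr using (hasDerivAt_neg_log_sinh_sq hr).deriv
  rw [iteratedDeriv_succ, iteratedDeriv_one, hderiv.deriv_eq,
    (hasDerivAt_neg_two_mul_coth hs).deriv, exp_neg, exp_log (by positivity)]
  ring

theorem stmt_6 (Ω₁ : ℝ → ℝ → ℝ)
    (hΩ₁ : ∀ t x, Ω₁ t x = Real.exp (2 * x) / (Real.exp (x + t) - (1 / 4) * Real.exp (x - t)) ^ 2)
    (ω : ℝ → ℝ → ℝ) (hω : ∀ t x, ω t x = Real.log (Ω₁ t x)) :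
    ∀ t x : ℝ, Real.exp (x + t) ≠ (1 / 4) * Real.exp (x - t) →
      iteratedDeriv 2 (fun t' => ω t' x) t - iteratedDeriv 2 (fun x' => ω t x') x
        = 2 * Real.exp (ω t x) := by
  intro t x hne
  have hω_eq : ∀ t x, ω t x = -log (sinh (t + log 2) ^ 2) := fun t x => by
    rw [hω, hΩ₁, exp_add_sub_quarter_mul_exp_sub, exp_two_mul_div_exp_mul_sq, log_inv]
  have hs : t + log 2 ≠ 0 := by
    rw [← sub_ne_zero, exp_add_sub_quarter_mul_exp_sub] at hne
    exact sinh_ne_zero.mp (right_ne_zero_of_mul hne)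
  simp only [hω_eq]
  rw [iteratedDeriv_comp_add_const (f := fun s => -log (sinh s ^ 2)), iteratedDeriv_const,
    if_neg two_ne_zero, sub_zero]
  exact iteratedDeriv_two_neg_log_sinh_sq hs
end

section
/- Let f, g : ℝ → ℝ be C¹ and positive, k ≠ 0, R, C ∈ ℝ, and let F, G satisfy F' = f, G' = g. Define Ω(u,v) = f(u)·g(v)·(k·F(u) - (R/(8k))·G(v) + C)⁻². Then on the set where k·F(u) - (R/(8k))·G(v) + C ≠ 0, one has -4·∂ᵤ∂ᵥ(log Ω) = R·Ω. -/
open Real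

theorem stmt_15 (f g F G : ℝ → ℝ) (hf : ContDiff ℝ 1 f) (hg : ContDiff ℝ 1 g)
    (hfpos : ∀ u, 0 < f u) (hgpos : ∀ v, 0 < g v)
    (k R C : ℝ) (hk : k ≠ 0)
    (hF : ∀ u, HasDerivAt F (f u) u) (hG : ∀ v, HasDerivAt G (g v) v)
    (D Ω : ℝ → ℝ → ℝ)
    (hD : ∀ u v, D u v = k * F u - (R / (8 * k)) * G v + C)
    (hΩ : ∀ u v, Ω u v = f u * g v / (D u v) ^ 2) :
    ∀ u v : ℝ, D u v ≠ 0 →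
      -4 * deriv (fun u' => deriv (fun v' => Real.log (Ω u' v')) v) u = R * Ω u v := by
  have hDfun : D = fun u v => k * F u - (R / (8 * k)) * G v + C := by
    funext u v; exact hD u v
  subst hDfun
  have hΩfun : Ω = fun u v => f u * g v / (k * F u - (R / (8 * k)) * G v + C) ^ 2 := by
    funext u v; exact hΩ u v
  subst hΩfun
  intro u v hDuv
  simp only at hDuv ⊢
  have hgd := hg.differentiable one_ne_zero
  -- inner derivative formula
  have hinner : ∀ u', (k * F u' - (R / (8 * k)) * G v + C) ≠ 0 →
      deriv (fun v' => Real.log (f u' * g v' / (k * F u' - (R / (8 * k)) * G v' + C) ^ 2)) v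
        = deriv g v / g v
          + (R / (4 * k)) * g v * (k * F u' - (R / (8 * k)) * G v + C)⁻¹ := by
    intro u' hd
    have h1 : HasDerivAt (fun v' => k * F u' - (R / (8 * k)) * G v' + C)
        (-(R / (8 * k) * g v)) v := by
      simpa using (((hG v).const_mul (R / (8 * k))).const_sub (k * F u')).add_const C
    have h2 := h1.pow 2
    have h3 : HasDerivAt (fun v' => f u' * g v') (f u' * deriv g v) v :=
      ((hgd v).hasDerivAt).const_mul (f u')
    have h4 := h3.div h2 (pow_ne_zero 2 hd)
    have hΩne : f u' * g v / (k * F u' - (R / (8 * k)) * G v + C) ^ 2 ≠ 0 := by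
      have := (hfpos u').ne'
      have := (hgpos v).ne'
      positivity
    have h5 := h4.log hΩne
    rw [show deriv (fun v' => Real.log (f u' * g v' / (k * F u' - (R / (8 * k)) * G v' + C) ^ 2)) v = _ from h5.deriv]
    simp only [Pi.div_apply, Pi.pow_apply]
    have hgne := (hgpos v).ne'
    have hfne := (hfpos u').ne'
    set d := k * F u' - (R / (8 * k)) * G v + C with hdset
    set a := f u' with haset
    set b := g v with hbset
    set c := deriv g v with hcset
    field_simp
    ring
  -- D(·, v) is continuous, so nonzero near u
  have hDu : HasDerivAt (fun u' => k * F u' - (R / (8 * k)) * G v + C) (k * f u) u := by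
    simpa using (((hF u).const_mul k).sub_const ((R / (8 * k)) * G v)).add_const C
  have hcont : ContinuousAt (fun u' => k * F u' - (R / (8 * k)) * G v + C) u := by
    exact hDu.continuousAt
  have hopen : ∀ᶠ u' in nhds u, (k * F u' - (R / (8 * k)) * G v + C) ≠ 0 :=
    hcont.eventually_ne hDuv
  have heq : (fun u' => deriv (fun v' =>
        Real.log (f u' * g v' / (k * F u' - (R / (8 * k)) * G v' + C) ^ 2)) v)
      =ᶠ[nhds u] (fun u' => deriv g v / g v
          + (R / (4 * k)) * g v * (k * F u' - (R / (8 * k)) * G v + C)⁻¹) :=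
    hopen.mono fun u' h => hinner u' h
  rw [heq.deriv_eq]
  have houter : HasDerivAt (fun u' => deriv g v / g v
      + (R / (4 * k)) * g v * (k * F u' - (R / (8 * k)) * G v + C)⁻¹)
      ((R / (4 * k)) * g v * (-(k * f u) / (k * F u - (R / (8 * k)) * G v + C) ^ 2)) u :=
    ((hDu.inv hDuv).const_mul ((R / (4 * k)) * g v)).const_add (deriv g v / g v)
  rw [houter.deriv]
  set d := k * F u - (R / (8 * k)) * G v + C with hdset
  field_simp
end
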